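/- arXiv:0901.2646 — 5 statements merged into one kernel-verified Lean document; each statement's English description precedes it below -/
import Mathlib

section
/- For every n ≥ 1, the sum Σ over pairs (d₁,d₂) of positive integers with lcm(d₁,d₂) = n of gcd(d₁,d₂) equals Σ_{d|n} σ(d)·μ(n/d)², where σ is the sum-of-divisors function. -/
/-!
Both sides are multiplicative in `n`. For coprime `m` and `n` every divisor of `m * n` is uniquely
a product of a divisor of `m` and one of `n`, and `gcd` and `lcm` of such products split into the
`m`-part and the `n`-part, so `lcm (a₁ b₁) (a₂ b₂) = m n` holds exactly when both parts do. At a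
prime power `p ^ k` the pairs `(p ^ i, p ^ j)` with `max i j = k` contribute `p ^ min i j`, which
sums to `σ(p ^ k) + σ(p ^ (k - 1))`; this is also the value of `σ * μ²`, as `μ(p ^ j)²` vanishes
for `j ≥ 2`.
-/

open ArithmeticFunction Finset
open scoped ArithmeticFunction.sigma ArithmeticFunction.Moebius

namespace Nat

theorem gcd_mul_mul_of_coprime {a₁ a₂ b₁ b₂ : ℕ} (h₁₂ : a₁.Coprime b₂) (h₂₁ : a₂.Coprime b₁)
    (h₂₂ : a₂.Coprime b₂) : gcd (a₁ * b₁) (a₂ * b₂) = gcd a₁ a₂ * gcd b₁ b₂ := by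
  rw [Coprime.gcd_mul _ h₂₂, Coprime.gcd_mul_right_cancel a₁ h₂₁.symm,
    Coprime.gcd_mul_left_cancel b₁ h₁₂]

theorem lcm_mul_mul_of_coprime {a₁ a₂ b₁ b₂ : ℕ} (h₁₂ : a₁.Coprime b₂) (h₂₁ : a₂.Coprime b₁)
    (h₂₂ : a₂.Coprime b₂) : lcm (a₁ * b₁) (a₂ * b₂) = lcm a₁ a₂ * lcm b₁ b₂ := by
  rw [Nat.lcm, Nat.lcm, Nat.lcm, gcd_mul_mul_of_coprime h₁₂ h₂₁ h₂₂,
    div_mul_div_comm (dvd_mul_of_dvd_left (gcd_dvd_left a₁ a₂) a₂)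
      (dvd_mul_of_dvd_left (gcd_dvd_left b₁ b₂) b₂), mul_mul_mul_comm a₁ b₁]

theorem lcm_pow_pow (p i j : ℕ) : lcm (p ^ i) (p ^ j) = p ^ max i j := by
  rcases le_total i j with h | h
  · rw [max_eq_right h, lcm_eq_right (pow_dvd_pow p h)]
  · rw [max_eq_left h, lcm_eq_left (pow_dvd_pow p h)]

theorem gcd_pow_pow (p i j : ℕ) : gcd (p ^ i) (p ^ j) = p ^ min i j := by
  rcases le_total i j with h | h
  · rw [min_eq_left h, gcd_eq_left (pow_dvd_pow p h)]
  · rw [min_eq_right h, gcd_eq_right (pow_dvd_pow p h)]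

end Nat

theorem Finset.sum_product_sum_product_mul {ι κ R : Type*} [NonUnitalNonAssocSemiring R]
    (s : Finset ι) (t : Finset κ) (f : ι → ι → R) (g : κ → κ → R) :
    ∑ x ∈ s ×ˢ t, ∑ y ∈ s ×ˢ t, f x.1 y.1 * g x.2 y.2 =
      (∑ a ∈ s, ∑ a' ∈ s, f a a') * ∑ b ∈ t, ∑ b' ∈ t, g b b' := by
  simp_rw [sum_product, sum_mul_sum]

theorem Finset.sum_range_sum_range_ite_max_eq {M : Type*} [AddCommMonoid M] (g : ℕ → M)
    (k : ℕ) :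
    ∑ i ∈ range (k + 1), ∑ j ∈ range (k + 1), (if max i j = k then g (min i j) else 0) =
      ∑ i ∈ range (k + 1), g i + ∑ i ∈ range k, g i := by
  have hlt : ∀ i ∈ range k,
      ∑ j ∈ range (k + 1), (if max i j = k then g (min i j) else 0) = g i := by
    intro i hi
    rw [mem_range] at hi
    rw [sum_eq_single_of_mem k (self_mem_range_succ k) fun j hj hjk => if_neg (by
      rw [mem_range] at hj; omega), if_pos (max_eq_right hi.le), min_eq_left hi.le]
  have htop : ∑ j ∈ range (k + 1), (if max k j = k then g (min k j) else 0) =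
      ∑ j ∈ range (k + 1), g j :=
    sum_congr rfl fun j hj => by
      rw [mem_range, Nat.lt_succ_iff] at hj
      rw [if_pos (max_eq_left hj), min_eq_right hj]
  rw [sum_range_succ, sum_congr rfl hlt, htop, add_comm]

theorem Nat.Coprime.sum_divisors_mul_eq_sum_product {M : Type*} [AddCommMonoid M] {m n : ℕ}
    (hmn : m.Coprime n) (f : ℕ → M) :
    ∑ d ∈ (m * n).divisors, f d = ∑ x ∈ m.divisors ×ˢ n.divisors, f (x.1 * x.2) := by
  rw [hmn.divisors_mul, sum_map]
  exact sum_attach _ fun x : ℕ × ℕ => f (x.1 * x.2)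

noncomputable def lcmGcdSum : ArithmeticFunction ℤ :=
  ⟨fun n => ∑ d₁ ∈ n.divisors, ∑ d₂ ∈ n.divisors,
      if Nat.lcm d₁ d₂ = n then (Nat.gcd d₁ d₂ : ℤ) else 0, by simp⟩

theorem lcmGcdSum_apply (n : ℕ) : lcmGcdSum n = ∑ d₁ ∈ n.divisors, ∑ d₂ ∈ n.divisors,
    if Nat.lcm d₁ d₂ = n then (Nat.gcd d₁ d₂ : ℤ) else 0 := rfl

theorem ite_lcm_mul_mul_eq_mul {m n a₁ a₂ b₁ b₂ : ℕ} (hmn : m.Coprime n) (hm : m ≠ 0)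
    (hn : n ≠ 0) (ha₁ : a₁ ∣ m) (ha₂ : a₂ ∣ m) (hb₁ : b₁ ∣ n) (hb₂ : b₂ ∣ n) :
    (if Nat.lcm (a₁ * b₁) (a₂ * b₂) = m * n then (Nat.gcd (a₁ * b₁) (a₂ * b₂) : ℤ) else 0) =
      (if Nat.lcm a₁ a₂ = m then (Nat.gcd a₁ a₂ : ℤ) else 0) *
        (if Nat.lcm b₁ b₂ = n then (Nat.gcd b₁ b₂ : ℤ) else 0) := by
  have h₁₂ := (hmn.coprime_dvd_left ha₁).coprime_dvd_right hb₂
  have h₂₁ := (hmn.coprime_dvd_left ha₂).coprime_dvd_right hb₁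
  have h₂₂ := (hmn.coprime_dvd_left ha₂).coprime_dvd_right hb₂
  have hlcm_pos : 0 < Nat.lcm a₁ a₂ :=
    Nat.lcm_pos (Nat.pos_of_dvd_of_pos ha₁ hm.bot_lt) (Nat.pos_of_dvd_of_pos ha₂ hm.bot_lt)
  simp only [Nat.lcm_mul_mul_of_coprime h₁₂ h₂₁ h₂₂, Nat.gcd_mul_mul_of_coprime h₁₂ h₂₁ h₂₂,
    mul_eq_mul_iff_eq_and_eq_of_pos (Nat.le_of_dvd hm.bot_lt (Nat.lcm_dvd ha₁ ha₂))
      (Nat.le_of_dvd hn.bot_lt (Nat.lcm_dvd hb₁ hb₂)) hlcm_pos hn.bot_lt,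
    ite_zero_mul_ite_zero, Nat.cast_mul]

theorem isMultiplicative_lcmGcdSum : lcmGcdSum.IsMultiplicative := by
  refine IsMultiplicative.iff_ne_zero.mpr ⟨by simp [lcmGcdSum_apply], fun {m n} hm hn hmn => ?_⟩
  simp only [lcmGcdSum_apply, hmn.sum_divisors_mul_eq_sum_product]
  rw [← sum_product_sum_product_mul]
  refine sum_congr rfl fun x hx => sum_congr rfl fun y hy => ?_
  simp only [mem_product, Nat.mem_divisors] at hx hy
  exact ite_lcm_mul_mul_eq_mul hmn hm hn hx.1.1 hy.1.1 hx.2.1 hy.2.1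

theorem lcmGcdSum_apply_prime_pow {p : ℕ} (hp : p.Prime) (k : ℕ) :
    lcmGcdSum (p ^ k) = ∑ i ∈ range (k + 1), (p : ℤ) ^ i + ∑ i ∈ range k, (p : ℤ) ^ i := by
  simp only [lcmGcdSum_apply, Nat.sum_divisors_prime_pow hp, Nat.lcm_pow_pow, Nat.gcd_pow_pow,
    Nat.pow_right_inj hp.one_lt, Nat.cast_pow]
  exact sum_range_sum_range_ite_max_eq (fun i => (p : ℤ) ^ i) k

theorem sigma_mul_pmul_moebius_apply (n : ℕ) :
    ((σ 1 : ArithmeticFunction ℤ) * pmul (μ : ArithmeticFunction ℤ) μ) n =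
      ∑ d ∈ n.divisors, (σ 1 d : ℤ) * (μ (n / d) : ℤ) ^ 2 := by
  rw [mul_apply, Nat.sum_divisorsAntidiagonal fun i j =>
    (σ 1 : ArithmeticFunction ℤ) i * pmul (μ : ArithmeticFunction ℤ) μ j]
  simp [pmul_apply, sq]

theorem sigma_mul_pmul_moebius_apply_prime_pow {p : ℕ} (hp : p.Prime) (k : ℕ) :
    ((σ 1 : ArithmeticFunction ℤ) * pmul (μ : ArithmeticFunction ℤ) μ) (p ^ k) =
      ∑ i ∈ range (k + 1), (p : ℤ) ^ i + ∑ i ∈ range k, (p : ℤ) ^ i := by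
  rw [sigma_mul_pmul_moebius_apply, Nat.sum_divisors_prime_pow hp]
  cases k with
  | zero => simp [sigma_one_apply]
  | succ k =>
    have hquot : ∀ i ≤ k + 1, p ^ (k + 1) / p ^ i = p ^ (k + 1 - i) :=
      fun i hi => Nat.pow_div hi hp.pos
    have hvanish : ∀ i ∈ range k,
        (σ 1 (p ^ i) : ℤ) * (μ (p ^ (k + 1) / p ^ i) : ℤ) ^ 2 = 0 := by
      intro i hi
      rw [mem_range] at hi
      rw [hquot i (by omega), moebius_apply_prime_pow hp (by omega), if_neg (by omega)]
      ring
    rw [sum_range_succ, sum_range_succ, sum_eq_zero hvanish, hquot _ le_rfl, hquot k k.le_succ,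
      Nat.sub_self, Nat.add_sub_cancel_left, pow_zero, pow_one, moebius_apply_one,
      moebius_apply_prime hp, sigma_one_apply_prime_pow hp, sigma_one_apply_prime_pow hp]
    push_cast
    ring

theorem lcmGcdSum_eq_sigma_mul_pmul_moebius :
    lcmGcdSum = (σ 1 : ArithmeticFunction ℤ) * pmul (μ : ArithmeticFunction ℤ) μ := by
  have hG : ((σ 1 : ArithmeticFunction ℤ) * pmul (μ : ArithmeticFunction ℤ) μ).IsMultiplicative :=
    isMultiplicative_sigma.natCast.mul (isMultiplicative_moebius.pmul isMultiplicative_moebius)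
  exact (IsMultiplicative.eq_iff_eq_on_prime_powers _ isMultiplicative_lcmGcdSum _ hG).mpr
    fun p k hp => by rw [lcmGcdSum_apply_prime_pow hp, sigma_mul_pmul_moebius_apply_prime_pow hp]

open ArithmeticFunction in
theorem lcm_gcd_sum_eq_sigma_mu_sq :
    ∀ n : ℕ, 1 ≤ n →
      (∑ d₁ ∈ n.divisors, ∑ d₂ ∈ n.divisors,
          if Nat.lcm d₁ d₂ = n then (Nat.gcd d₁ d₂ : ℤ) else 0) =
        ∑ d ∈ n.divisors, (sigma 1 d : ℤ) * (moebius (n / d) : ℤ) ^ 2 := by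
  intro n _
  rw [← lcmGcdSum_apply, ← sigma_mul_pmul_moebius_apply, lcmGcdSum_eq_sigma_mul_pmul_moebius]
end

section
/- For every n ≥ 1, Σ over pairs (d₁,d₂) with lcm(d₁,d₂) = n of gcd(d₁,d₂) equals the number of cyclic subgroups of the group C_n × C_n, where C_n is the cyclic group of order n. -/
/-!
The cyclic subgroup generated by `g` has exactly `φ (ord g)` generators, so a finite group has
`∑ g, 1 / φ (ord g)` cyclic subgroups. In `C_n × C_n` we have `ord (x, y) = lcm (ord x) (ord y)`
and `C_n` has `φ d` elements of order `d` for each `d ∣ n`, so this sum equals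
`∑_{d₁, d₂ ∣ n} φ d₁ φ d₂ / φ (lcm d₁ d₂) = ∑_{d₁, d₂ ∣ n} φ (gcd d₁ d₂)`.

On the other side, expand `gcd d₁ d₂ = ∑_{e ∣ gcd d₁ d₂} φ e`. The triples `(d₁, d₂, e)` with
`lcm d₁ d₂ = n` and `e ∣ gcd d₁ d₂` are in bijection with the pairs `(a, b)` of divisors of `n`
with `gcd a b = e`, via `a = e * (n / d₂)`, `b = e * (n / d₁)`.
-/

open Finset
open scoped Nat

namespace Nat

theorem gcd_div_div_eq_div_lcm {k m n : ℕ} (hm : m ∣ k) (hn : n ∣ k) :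
    gcd (k / m) (k / n) = k / lcm m n := by
  rcases k.eq_zero_or_pos with rfl | hk
  · simp
  have hlcm : lcm m n = k / gcd (k / m) (k / n) := by
    rw [← div_lcm_eq_div_gcd (div_dvd_of_dvd hm) (div_dvd_of_dvd hn),
      Nat.div_div_self hm hk.ne', Nat.div_div_self hn hk.ne']
  rw [hlcm, Nat.div_div_self ((gcd_dvd_left _ _).trans (div_dvd_of_dvd hm)) hk.ne']

theorem mul_div_dvd_of_dvd {e a n : ℕ} (he : e ∣ a) (ha : a ∣ n) : e * (n / a) ∣ n :=
  (Nat.mul_dvd_mul_right he _).trans (Nat.mul_div_cancel' ha).dvd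

theorem mul_div_mul_div_cancel {e a n : ℕ} (he : e ∣ a) (ha : a ∣ n) (hn : n ≠ 0) :
    e * (n / (e * (n / a))) = a := by
  rw [mul_comm e (n / a), ← Nat.div_div_eq_div_mul, Nat.div_div_self ha hn,
    Nat.mul_div_cancel' he]

theorem gcd_mul_div_mul_div_of_lcm_eq {a b n : ℕ} (hab : lcm a b = n) (hn : n ≠ 0) (e : ℕ) :
    gcd (e * (n / b)) (e * (n / a)) = e := by
  rw [gcd_mul_left, gcd_div_div_eq_div_lcm (hab ▸ dvd_lcm_right a b) (hab ▸ dvd_lcm_left a b),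
    lcm_comm, hab, Nat.div_self (pos_of_ne_zero hn), mul_one]

theorem lcm_gcd_mul_div_gcd_mul_div {a b n : ℕ} (ha : a ∣ n) (hb : b ∣ n) :
    lcm (gcd a b * (n / b)) (gcd a b * (n / a)) = n := by
  rw [lcm_mul_left, div_lcm_eq_div_gcd hb ha, gcd_comm,
    Nat.mul_div_cancel' ((gcd_dvd_left b a).trans hb)]

theorem sum_gcd_of_lcm_eq_eq_sum_totient_gcd {n : ℕ} (hn : n ≠ 0) :
    (∑ d₁ ∈ n.divisors, ∑ d₂ ∈ n.divisors, if lcm d₁ d₂ = n then gcd d₁ d₂ else 0) =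
      ∑ d₁ ∈ n.divisors, ∑ d₂ ∈ n.divisors, φ (gcd d₁ d₂) := by
  rw [← sum_product' (f := fun a b => φ (gcd a b)),
    ← sum_product' (f := fun a b => if lcm a b = n then gcd a b else 0), ← sum_filter]
  calc ∑ p ∈ n.divisors ×ˢ n.divisors with lcm p.1 p.2 = n, gcd p.1 p.2
      = ∑ x ∈ {p ∈ n.divisors ×ˢ n.divisors | lcm p.1 p.2 = n}.sigma
          fun p => (gcd p.1 p.2).divisors, φ x.2 := by
        rw [sum_sigma]
        exact sum_congr rfl fun p _ => (sum_totient _).symm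
    _ = ∑ p ∈ n.divisors ×ˢ n.divisors, φ (gcd p.1 p.2) := by
      refine sum_nbij' (fun x => (x.2 * (n / x.1.2), x.2 * (n / x.1.1)))
        (fun p => ⟨(gcd p.1 p.2 * (n / p.2), gcd p.1 p.2 * (n / p.1)), gcd p.1 p.2⟩)
        ?_ ?_ ?_ ?_ ?_
      · rintro ⟨⟨a, b⟩, e⟩ hx
        simp only [mem_sigma, mem_filter, mem_product, mem_divisors] at hx ⊢
        obtain ⟨⟨⟨⟨ha, -⟩, hb, -⟩, -⟩, he, -⟩ := hx
        exact ⟨⟨mul_div_dvd_of_dvd (he.trans (gcd_dvd_right a b)) hb, hn⟩,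
          mul_div_dvd_of_dvd (he.trans (gcd_dvd_left a b)) ha, hn⟩
      · rintro ⟨a, b⟩ hp
        simp only [mem_product, mem_divisors] at hp
        obtain ⟨⟨ha, -⟩, hb, -⟩ := hp
        have hb' := mul_div_dvd_of_dvd (gcd_dvd_right a b) hb
        simp only [mem_sigma, mem_filter, mem_product, mem_divisors]
        exact ⟨⟨⟨⟨hb', hn⟩, mul_div_dvd_of_dvd (gcd_dvd_left a b) ha, hn⟩,
          lcm_gcd_mul_div_gcd_mul_div ha hb⟩, dvd_gcd (dvd_mul_right _ _) (dvd_mul_right _ _),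
          (gcd_pos_of_pos_left _ (pos_of_dvd_of_pos hb' (pos_of_ne_zero hn))).ne'⟩
      · rintro ⟨⟨a, b⟩, e⟩ hx
        simp only [mem_sigma, mem_filter, mem_product, mem_divisors] at hx
        obtain ⟨⟨⟨⟨ha, -⟩, hb, -⟩, hab⟩, he, -⟩ := hx
        simp only [gcd_mul_div_mul_div_of_lcm_eq hab hn e,
          mul_div_mul_div_cancel (he.trans (gcd_dvd_left a b)) ha hn,
          mul_div_mul_div_cancel (he.trans (gcd_dvd_right a b)) hb hn]
      · rintro ⟨a, b⟩ hp
        simp only [mem_product, mem_divisors] at hp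
        obtain ⟨⟨ha, -⟩, hb, -⟩ := hp
        simp only [mul_div_mul_div_cancel (gcd_dvd_left a b) ha hn,
          mul_div_mul_div_cancel (gcd_dvd_right a b) hb hn]
      · rintro ⟨⟨a, b⟩, e⟩ hx
        simp only [mem_sigma, mem_filter, mem_product, mem_divisors] at hx
        rw [gcd_mul_div_mul_div_of_lcm_eq hx.1.2 hn e]

theorem totient_gcd_mul_totient_lcm (a b : ℕ) :
    φ (gcd a b) * φ (lcm a b) = φ a * φ b := by
  rcases (gcd a b).eq_zero_or_pos with h | hg
  · simp [gcd_eq_zero_iff.mp h]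
  have h := totient_gcd_mul_totient_mul (gcd a b) (lcm a b)
  rw [gcd_eq_left ((gcd_dvd_left a b).trans (dvd_lcm_left a b)), gcd_mul_lcm,
    totient_gcd_mul_totient_mul a b] at h
  exact (Nat.eq_of_mul_eq_mul_right hg h).symm

end Nat

namespace AddSubgroup

variable {A : Type*} [AddGroup A]

section Finite

variable [Finite A]

theorem zmultiples_eq_zmultiples_iff_mem_and_addOrderOf_eq {g h : A} :
    zmultiples h = zmultiples g ↔ h ∈ zmultiples g ∧ addOrderOf h = addOrderOf g := by
  constructor
  · intro hgh
    refine ⟨hgh ▸ mem_zmultiples h, ?_⟩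
    rw [← Nat.card_zmultiples, hgh, Nat.card_zmultiples]
  · rintro ⟨hmem, hord⟩
    refine eq_of_le_of_card_ge (zmultiples_le.mpr hmem) ?_
    rw [Nat.card_zmultiples, Nat.card_zmultiples, hord]

theorem card_zmultiples_eq_zmultiples (g : A) :
    Nat.card {h : A // zmultiples h = zmultiples g} = φ (addOrderOf g) := by
  classical
  have : Fintype A := Fintype.ofFinite A
  calc Nat.card {h : A // zmultiples h = zmultiples g}
      = Nat.card {x : zmultiples g // addOrderOf (x : A) = addOrderOf g} := by
        simp_rw [zmultiples_eq_zmultiples_iff_mem_and_addOrderOf_eq]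
        exact Nat.card_congr (Equiv.subtypeSubtypeEquivSubtypeInter _ _).symm
    _ = φ (addOrderOf g) := by
        simp_rw [addOrderOf_coe]
        rw [Nat.card_eq_fintype_card, Fintype.card_subtype,
          IsAddCyclic.card_addOrderOf_eq_totient Fintype.card_zmultiples.symm.dvd]

end Finite

theorem card_cyclic_eq_sum_inv_totient_addOrderOf [Fintype A] :
    (Nat.card {H : AddSubgroup A // ∃ g, H = zmultiples g} : ℚ) =
      ∑ g : A, ((φ (addOrderOf g) : ℕ) : ℚ)⁻¹ := by
  classical
  have hcard : Nat.card {H : AddSubgroup A // ∃ g, H = zmultiples g} =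
      #(univ.image fun g : A => zmultiples g) := by
    rw [← Nat.card_eq_finsetCard]
    exact Nat.card_congr (Equiv.subtypeEquivRight fun H => by simp [eq_comm])
  rw [hcard, card_eq_sum_ones, Nat.cast_sum, Nat.cast_one]
  refine sum_image' _ fun g _ => ?_
  have hfiber : ∀ h ∈ ({h | zmultiples h = zmultiples g} : Finset A),
      ((φ (addOrderOf h) : ℕ) : ℚ)⁻¹ = ((φ (addOrderOf g) : ℕ) : ℚ)⁻¹ := by
    intro h hh
    rw [(zmultiples_eq_zmultiples_iff_mem_and_addOrderOf_eq.mp (mem_filter.mp hh).2).2]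
  rw [sum_congr rfl hfiber, sum_const, ← Fintype.card_subtype, ← Nat.card_eq_fintype_card,
    card_zmultiples_eq_zmultiples, nsmul_eq_mul, mul_inv_cancel₀]
  exact_mod_cast (Nat.totient_pos.mpr (addOrderOf_pos g)).ne'

end AddSubgroup

namespace IsAddCyclic

variable {A B M : Type*} [AddGroup A] [Fintype A] [IsAddCyclic A] [AddCommMonoid M]

theorem sum_addOrderOf (f : ℕ → M) :
    ∑ x : A, f (addOrderOf x) = ∑ d ∈ (Fintype.card A).divisors, φ d • f d := by
  classical
  rw [← sum_fiberwise_of_maps_to' (t := (Fintype.card A).divisors) fun x _ =>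
    Nat.mem_divisors.mpr ⟨addOrderOf_dvd_card, Fintype.card_ne_zero⟩]
  refine sum_congr rfl fun d hd => ?_
  rw [sum_const, card_addOrderOf_eq_totient (Nat.dvd_of_mem_divisors hd)]

theorem sum_prod_addOrderOf [AddGroup B] [Fintype B] [IsAddCyclic B] (f : ℕ → ℕ → M) :
    ∑ g : A × B, f (addOrderOf g.1) (addOrderOf g.2) =
      ∑ d₁ ∈ (Fintype.card A).divisors, ∑ d₂ ∈ (Fintype.card B).divisors,
        φ d₁ • φ d₂ • f d₁ d₂ := by
  calc ∑ g : A × B, f (addOrderOf g.1) (addOrderOf g.2)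
      = ∑ x : A, ∑ d₂ ∈ (Fintype.card B).divisors, φ d₂ • f (addOrderOf x) d₂ :=
        (Fintype.sum_prod_type' _).trans
          (sum_congr rfl fun x _ => sum_addOrderOf (f (addOrderOf x)))
    _ = _ := by
        rw [sum_addOrderOf fun d₁ => ∑ d₂ ∈ (Fintype.card B).divisors, φ d₂ • f d₁ d₂]
        simp_rw [smul_sum]

end IsAddCyclic

theorem ZMod.sum_prod_inv_totient_addOrderOf (n : ℕ) [NeZero n] :
    ∑ g : ZMod n × ZMod n, ((φ (addOrderOf g) : ℕ) : ℚ)⁻¹ =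
      ∑ d₁ ∈ n.divisors, ∑ d₂ ∈ n.divisors, (φ (Nat.gcd d₁ d₂) : ℚ) := by
  simp_rw [Prod.addOrderOf]
  rw [IsAddCyclic.sum_prod_addOrderOf fun d₁ d₂ => ((φ (Nat.lcm d₁ d₂) : ℕ) : ℚ)⁻¹, ZMod.card]
  refine sum_congr rfl fun d₁ h₁ => sum_congr rfl fun d₂ h₂ => ?_
  have hlcm : (φ (Nat.lcm d₁ d₂) : ℚ) ≠ 0 := by
    exact_mod_cast (Nat.totient_pos.mpr
      (Nat.lcm_pos (Nat.pos_of_mem_divisors h₁) (Nat.pos_of_mem_divisors h₂))).ne'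
  rw [nsmul_eq_mul, nsmul_eq_mul, ← mul_assoc, ← Nat.cast_mul, ← Nat.totient_gcd_mul_totient_lcm,
    Nat.cast_mul, mul_inv_cancel_right₀ hlcm]

theorem lcm_gcd_sum_eq_card_cyclic_subgroups :
    ∀ n : ℕ, 1 ≤ n →
      (∑ d₁ ∈ n.divisors, ∑ d₂ ∈ n.divisors,
          if Nat.lcm d₁ d₂ = n then Nat.gcd d₁ d₂ else 0) =
        Nat.card {H : AddSubgroup (ZMod n × ZMod n) //
          ∃ g, H = AddSubgroup.zmultiples g} := by
  intro n hn
  have : NeZero n := NeZero.of_pos hn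
  have hcard := AddSubgroup.card_cyclic_eq_sum_inv_totient_addOrderOf (A := ZMod n × ZMod n)
  rw [ZMod.sum_prod_inv_totient_addOrderOf] at hcard
  rw [Nat.sum_gcd_of_lcm_eq_eq_sum_totient_gcd (NeZero.ne n)]
  exact_mod_cast hcard.symm
end

section
/- Let O : ℕ → ℤ be an orbit-counting sequence and p a prime. Define O_p(n) = p·O(pn) + O(n) if p ∤ n, and O_p(n) = p·O(pn) if p | n. If F(n) = Σ_{d|n} d·O(d), then Σ_{d|n} d·O_p(d) = F(pn) for all n ≥ 1. -/
theorem iterate_prime_orbit_count (p : ℕ) (hp : p.Prime) (O Op F : ℕ → ℤ)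
    (hOp : ∀ n : ℕ, 1 ≤ n →
      Op n = if p ∣ n then p * O (p * n) else p * O (p * n) + O n)
    (hF : ∀ n : ℕ, 1 ≤ n → F n = ∑ d ∈ n.divisors, (d : ℤ) * O d) :
    ∀ n : ℕ, 1 ≤ n → ∑ d ∈ n.divisors, (d : ℤ) * Op d = F (p * n) := by
  intro n hn
  have hn0 : n ≠ 0 := by omega
  have hp0 : p ≠ 0 := hp.ne_zero
  have hp1 : 0 < p := hp.pos
  rw [hF (p * n) (by have := Nat.one_le_iff_ne_zero.mpr (mul_ne_zero hp0 hn0); exact this)]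
  have key : (p * n).divisors =
      (n.divisors.image (fun d => p * d)) ∪ (n.divisors.filter (fun d => ¬ p ∣ d)) := by
    ext e
    simp only [Finset.mem_union, Finset.mem_image, Finset.mem_filter, Nat.mem_divisors,
      mul_ne_zero_iff]
    constructor
    · rintro ⟨he, hpn0⟩
      by_cases hpe : p ∣ e
      · obtain ⟨d, rfl⟩ := hpe
        exact Or.inl ⟨d, ⟨(mul_dvd_mul_iff_left hp0).mp he, hpn0.2⟩, rfl⟩
      · right
        refine ⟨⟨(Nat.Coprime.dvd_of_dvd_mul_left ?_ he), hpn0.2⟩, hpe⟩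
        exact (hp.coprime_iff_not_dvd.mpr hpe).symm
    · rintro (⟨d, ⟨hd, hd0⟩, rfl⟩ | ⟨⟨he, hn0'⟩, _⟩)
      · exact ⟨mul_dvd_mul_left p hd, hp0, hd0⟩
      · exact ⟨he.mul_left p, hp0, hn0'⟩
  rw [key, Finset.sum_union, Finset.sum_image]
  · have : ∀ d ∈ n.divisors, (d : ℤ) * Op d =
        (p * d : ℕ) * O (p * d) + (if p ∣ d then 0 else (d : ℤ) * O d) := by
      intro d hd
      have hd1 : 1 ≤ d := Nat.pos_of_mem_divisors hd
      rw [hOp d hd1]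
      by_cases h : p ∣ d <;> simp [h] <;> push_cast <;> ring
    rw [Finset.sum_congr rfl this, Finset.sum_add_distrib, Finset.sum_ite, Finset.sum_const_zero,
      zero_add]
  · intro a _ b _ h
    exact Nat.eq_of_mul_eq_mul_left hp1 h
  · rw [Finset.disjoint_left]
    rintro e he hf
    simp only [Finset.mem_image] at he
    obtain ⟨d, _, rfl⟩ := he
    simp only [Finset.mem_filter] at hf
    exact hf.2 ⟨d, rfl⟩
end

section
/- Let F(n) = 2·⌊n⌋₂ − 1 where ⌊n⌋₂ is the 2-part of n. Then (1/n)·Σ_{d|n} μ(n/d)·F(2d) equals 3 if n = 1, equals 2 if n = 2^k for some k ≥ 1, and equals 0 otherwise. -/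
/-!
For `d ≥ 1`, `F (2 * d) = 4 * 2 ^ v₂(d) - 1`, and `2 ^ v₂(d)` is the divisor sum of the function
equal to `φ` on powers of `2` and to `0` elsewhere (the divisors of `d` that are powers of two are
the divisors of `2 ^ v₂(d)`, and `∑_{e ∣ m} φ e = m`). So `d ↦ F (2 * d)` is the divisor sum of
`4 · φ · 1_{powers of 2} - δ₁`, and Möbius inversion turns the sum in question into
`(4 · φ(n) · 1_{n power of 2} - δ₁(n)) / n`, which is `3`, `2` or `0`.
-/

open Classical

open Finset

open ArithmeticFunction ArithmeticFunction.Moebius in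
theorem sum_moebius_div_mul_eq_of_sum_divisors_eq {R : Type*} [NonAssocRing R] {f g : ℕ → R}
    (h : ∀ n > 0, ∑ i ∈ n.divisors, f i = g n) {n : ℕ} (hn : 0 < n) :
    ∑ d ∈ n.divisors, (μ (n / d) : R) * g d = f n := by
  rw [← sum_eq_iff_sum_mul_moebius_eq.mp h n hn,
    Nat.sum_divisorsAntidiagonal' (f := fun a b => (μ a : R) * g b)]

namespace Nat

noncomputable def primePowTotient (p n : ℕ) : ℕ := if ∃ k, n = p ^ k then φ n else 0

theorem filter_divisors_exists_pow_eq {p n : ℕ} (hp : p.Prime) (hn : n ≠ 0) :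
    {d ∈ n.divisors | ∃ k, d = p ^ k} = (p ^ n.factorization p).divisors := by
  ext d
  simp only [mem_filter, mem_divisors, Nat.dvd_prime_pow hp, ne_eq, pow_eq_zero_iff', hp.ne_zero,
    false_and, not_false_eq_true, and_true, hn]
  constructor
  · rintro ⟨hdn, k, rfl⟩
    exact ⟨k, (hp.pow_dvd_iff_le_factorization hn).mp hdn, rfl⟩
  · rintro ⟨k, hk, rfl⟩
    exact ⟨(hp.pow_dvd_iff_le_factorization hn).mpr hk, k, rfl⟩

theorem sum_divisors_primePowTotient {p n : ℕ} (hp : p.Prime) (hn : n ≠ 0) :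
    ∑ d ∈ n.divisors, primePowTotient p d = p ^ n.factorization p := by
  unfold primePowTotient
  rw [← sum_filter, filter_divisors_exists_pow_eq hp hn, sum_totient]

end Nat

open ArithmeticFunction ArithmeticFunction.Moebius in
theorem feigenbaum_square_orbit_count (F : ℕ → ℚ)
    (hF : ∀ n : ℕ, 1 ≤ n → F n = 2 * 2 ^ (n.factorization 2) - 1) :
    ∀ n : ℕ, 1 ≤ n →
      (1 / (n : ℚ)) * ∑ d ∈ n.divisors, (μ (n / d) : ℚ) * F (2 * d) =
        if n = 1 then 3
        else if ∃ k : ℕ, 1 ≤ k ∧ n = 2 ^ k then 2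
        else 0 := by
  intro n hn
  have hF_eq_sum : ∀ m > 0,
      ∑ i ∈ m.divisors, (4 * (Nat.primePowTotient 2 i : ℚ) - if i = 1 then 1 else 0) =
        F (2 * m) := by
    intro m hm
    rw [sum_sub_distrib, ← mul_sum, ← Nat.cast_sum,
      Nat.sum_divisors_primePowTotient Nat.prime_two hm.ne', sum_ite_eq',
      if_pos (Nat.one_mem_divisors.mpr hm.ne'), hF _ (by omega),
      Nat.factorization_mul two_ne_zero hm.ne', Nat.prime_two.factorization]
    simp only [Finsupp.add_apply, Finsupp.single_eq_same]
    push_cast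
    ring
  rw [sum_moebius_div_mul_eq_of_sum_divisors_eq hF_eq_sum hn]
  split_ifs with h1 h2
  · rw [h1, Nat.primePowTotient, if_pos ⟨0, rfl⟩]
    norm_num
  · obtain ⟨k, hk, rfl⟩ := h2
    obtain ⟨j, rfl⟩ : ∃ j, k = j + 1 := ⟨k - 1, by omega⟩
    rw [Nat.primePowTotient, if_pos ⟨_, rfl⟩, Nat.totient_prime_pow_succ Nat.prime_two]
    push_cast
    field_simp
    ring
  · have : ¬ ∃ k, n = 2 ^ k := by
      rintro ⟨k, rfl⟩
      exact h2 ⟨k, Nat.pos_of_ne_zero (by rintro rfl; exact h1 rfl), rfl⟩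
    simp [Nat.primePowTotient, this]
end

section
/- Let O_S, O_T : ℕ → ℤ (for n ≥ 1) with corresponding fixed-point counts F_S(n) = Σ_{d|n} d·O_S(d), F_T(n) = Σ_{d|n} d·O_T(d). If O_S and O_T are both multiplicative (f(mn) = f(m)f(n) whenever gcd(m,n)=1 and f(1)=1), then the product orbit count O_{S×T}(n) = Σ_{lcm(d₁,d₂)=n} O_S(d₁)·O_T(d₂)·gcd(d₁,d₂) is also multiplicative. -/
/-!
Writing `F f n = ∑_{d ∣ n} d f(d)` for the fixed-point count attached to an orbit count `f`,
the orbit count `O` of the product satisfies `F O = F OS · F OT`: grouping the pairs `(d₁, d₂)`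
of divisors of `n` by `lcm d₁ d₂` and using `lcm · gcd = d₁ d₂`. The functions `F OS`, `F OT`
are Dirichlet convolutions of `ζ` with multiplicative functions, so their pointwise product is
multiplicative, and Möbius inversion makes `n ↦ n O(n)`, hence `O`, multiplicative.
-/

/-- `f` is multiplicative: `f 1 = 1` and `f (m*n) = f m * f n` for coprime `m, n`. -/
def IsMultFn (f : ℕ → ℤ) : Prop :=
  f 1 = 1 ∧ ∀ m n : ℕ, Nat.Coprime m n → f (m * n) = f m * f n

open ArithmeticFunction Finset
open scoped ArithmeticFunction.zeta ArithmeticFunction.Moebius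

section CommSemiring

variable {R : Type*} [CommSemiring R]

def idMul (f : ℕ → R) : ArithmeticFunction R :=
  ⟨fun n => n * f n, by simp⟩

@[simp]
theorem idMul_apply (f : ℕ → R) (n : ℕ) : idMul f n = n * f n :=
  rfl

def productOrbitCount (f g : ℕ → R) (n : ℕ) : R :=
  ∑ d₁ ∈ n.divisors, ∑ d₂ ∈ n.divisors,
    if Nat.lcm d₁ d₂ = n then f d₁ * g d₂ * (Nat.gcd d₁ d₂ : R) else 0

theorem sum_divisors_sum_divisors_ite_lcm_eq_of_dvd {d n : ℕ} (hdn : d ∣ n) (hn : n ≠ 0)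
    (h : ℕ → ℕ → R) :
    ∑ a ∈ d.divisors, ∑ b ∈ d.divisors, (if a.lcm b = d then h a b else 0) =
      ∑ a ∈ n.divisors, ∑ b ∈ n.divisors, if a.lcm b = d then h a b else 0 := by
  have hd : d ≠ 0 := ne_zero_of_dvd_ne_zero hn hdn
  rw [← sum_product', ← sum_product']
  simp only [← sum_filter]
  congr 1
  refine Finset.ext fun ⟨a, b⟩ => ?_
  simp only [mem_filter, mem_product, Nat.mem_divisors]
  constructor
  · rintro ⟨⟨⟨ha, -⟩, hb, -⟩, hab⟩
    exact ⟨⟨⟨ha.trans hdn, hn⟩, hb.trans hdn, hn⟩, hab⟩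
  · rintro ⟨-, rfl⟩
    exact ⟨⟨⟨Nat.dvd_lcm_left a b, hd⟩, Nat.dvd_lcm_right a b, hd⟩, rfl⟩

theorem sum_divisors_mul_productOrbitCount (f g : ℕ → R) {n : ℕ} (hn : n ≠ 0) :
    ∑ d ∈ n.divisors, (d : R) * productOrbitCount f g d =
      (∑ d ∈ n.divisors, (d : R) * f d) * ∑ d ∈ n.divisors, (d : R) * g d := by
  calc ∑ d ∈ n.divisors, (d : R) * productOrbitCount f g d
      = ∑ d ∈ n.divisors, ∑ a ∈ n.divisors, ∑ b ∈ n.divisors,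
          if a.lcm b = d then (d : R) * (f a * g b * a.gcd b) else 0 := by
        refine sum_congr rfl fun d hd => ?_
        rw [productOrbitCount,
          sum_divisors_sum_divisors_ite_lcm_eq_of_dvd (Nat.dvd_of_mem_divisors hd) hn]
        simp only [mul_sum, mul_ite, mul_zero]
    _ = ∑ a ∈ n.divisors, ∑ b ∈ n.divisors, (a.lcm b : R) * (f a * g b * a.gcd b) := by
        rw [sum_comm]
        refine sum_congr rfl fun a ha => ?_
        rw [sum_comm]
        refine sum_congr rfl fun b hb => ?_
        have hlcm : a.lcm b ∈ n.divisors := Nat.mem_divisors.2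
          ⟨Nat.lcm_dvd (Nat.dvd_of_mem_divisors ha) (Nat.dvd_of_mem_divisors hb), hn⟩
        rw [sum_ite_eq, if_pos hlcm]
    _ = _ := by
        rw [sum_mul_sum]
        refine sum_congr rfl fun a _ => sum_congr rfl fun b _ => ?_
        calc (a.lcm b : R) * (f a * g b * a.gcd b)
            = ((a.gcd b * a.lcm b : ℕ) : R) * (f a * g b) := by push_cast; ring
          _ = a * f a * (b * g b) := by rw [Nat.gcd_mul_lcm]; push_cast; ring

end CommSemiring

theorem idMul_productOrbitCount {R : Type*} [CommRing R] (f g : ℕ → R) :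
    idMul (productOrbitCount f g) =
      (μ : ArithmeticFunction R) * ((ζ * idMul f).pmul (ζ * idMul g)) := by
  have hζ : ζ * idMul (productOrbitCount f g) = (ζ * idMul f).pmul (ζ * idMul g) := by
    ext n
    rcases eq_or_ne n 0 with rfl | hn
    · simp
    simp only [pmul_apply, coe_zeta_mul_apply, idMul_apply]
    exact sum_divisors_mul_productOrbitCount f g hn
  rw [← hζ, ← mul_assoc, coe_moebius_mul_coe_zeta, one_mul]

theorem isMultFn_iff_isMultiplicative_idMul {f : ℕ → ℤ} :
    IsMultFn f ↔ (idMul f).IsMultiplicative := by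
  constructor
  · rintro ⟨h1, hmul⟩
    refine ⟨by simp [h1], fun {m n} hmn => ?_⟩
    simp only [idMul_apply, hmul m n hmn]
    push_cast
    ring
  · rintro ⟨hone, hmul⟩
    have h1 : f 1 = 1 := by simpa using hone
    refine ⟨h1, fun m n hmn => ?_⟩
    rcases eq_or_ne m 0 with rfl | hm
    · simp [(Nat.coprime_zero_left n).1 hmn, h1]
    rcases eq_or_ne n 0 with rfl | hn
    · simp [(Nat.coprime_zero_right m).1 hmn, h1]
    have hmn := hmul hmn
    simp only [idMul_apply, Nat.cast_mul] at hmn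
    refine mul_left_cancel₀ (mul_ne_zero (Nat.cast_ne_zero.2 hm) (Nat.cast_ne_zero.2 hn)) ?_
    linear_combination hmn

theorem product_orbit_count_multiplicative_general (OS OT : ℕ → ℤ)
    (hOS : IsMultFn OS) (hOT : IsMultFn OT) :
    IsMultFn (fun n => ∑ d₁ ∈ n.divisors, ∑ d₂ ∈ n.divisors,
      if Nat.lcm d₁ d₂ = n then OS d₁ * OT d₂ * (Nat.gcd d₁ d₂ : ℤ) else 0) := by
  change IsMultFn (productOrbitCount OS OT)
  rw [isMultFn_iff_isMultiplicative_idMul] at hOS hOT ⊢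
  rw [idMul_productOrbitCount]
  exact isMultiplicative_moebius.intCast.mul
    ((isMultiplicative_zeta.natCast.mul hOS).pmul (isMultiplicative_zeta.natCast.mul hOT))

theorem product_orbit_count_multiplicative (OS OT FS FT : ℕ → ℤ)
    (hFS : ∀ n : ℕ, 1 ≤ n → FS n = ∑ d ∈ n.divisors, (d : ℤ) * OS d)
    (hFT : ∀ n : ℕ, 1 ≤ n → FT n = ∑ d ∈ n.divisors, (d : ℤ) * OT d)
    (hOS : IsMultFn OS) (hOT : IsMultFn OT) :
    IsMultFn (fun n => ∑ d₁ ∈ n.divisors, ∑ d₂ ∈ n.divisors,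
      if Nat.lcm d₁ d₂ = n then OS d₁ * OT d₂ * (Nat.gcd d₁ d₂ : ℤ) else 0) :=
  product_orbit_count_multiplicative_general OS OT hOS hOT
end
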